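/- Structure of high-weight solutions in the kSUM reduction: let x_1,…,x_h be positive integers, T = Σ_{i=1}^h x_i, and k, B positive integers with 1 ≤ k < h and B < T. Consider the two-machine JIT flow-shop instance with kh+1 jobs: for each i ∈ {1,…,k}, j ∈ {1,…,h} a job J_{ij} with p^(1)_{ij} = x_j, p^(2)_{ij} = 1, w_{ij} = T + x_j, d_{ij} = iT; and a job J_{kh+1} with p^(1)_{kh+1} = (k+1)T − B, p^(2)_{kh+1} = 1, w_{kh+1} = k²(T+1)², d_{kh+1} = (k+1)T + 1. Then every feasible set E with Σ_{j∈E} w_j ≥ kT + B + k²(T+1)² satisfies: J_{kh+1} ∈ E; the set E' = E ∖ {J_{kh+1}} contains exactly k jobs, at most one job J_{ij} for each i; and Σ_{J_{ij}∈E'} x_j = B. -/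

import Mathlib

/-!
Jobs of a JIT schedule have pairwise distinct due dates, because their operations on the last
machine end there; hence `E` holds at most one job `J_{ij}` per `i`, so at most `k` of them, each
of weight at most `2T`. Without `J_{kh+1}` the weight would be at most `2kT`, which is too little.
With `J_{kh+1}` in `E`, its first operation starts by time `B` and runs past `kT`, whereas every
other job leaves the first machine before `kT`; so the other jobs are processed on the first
machine within `(0, B]` and their `x`-values sum to at most `B`. The weight bound forces equality
in both estimates.
-/

open Finset

/-- A just-in-time flow-shop instance on `m` machines with jobs of type `J`:
`p i j` is the (positive integer) processing time of job `j` on machine `i`,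
`d j` its positive integer due date and `w j` its positive integer weight. -/
structure JITInstance (m : ℕ) (J : Type) where
  p : Fin m → J → ℕ
  d : J → ℕ
  w : J → ℕ
  p_pos : ∀ i j, 0 < p i j
  d_pos : ∀ j, 0 < d j
  w_pos : ∀ j, 0 < w j

/-- `S` is a JIT schedule of the job set `E`: on every machine the processing
intervals `(S i j, S i j + p i j]` of distinct jobs of `E` are pairwise disjoint,
each job's operation on machine `i+1` starts no earlier than its completion on
machine `i`, and every job of `E` completes on the last machine exactly at its
due date.  (Start times are nonnegative automatically, being naturals.) -/
def IsJITSchedule {m : ℕ} {J : Type} (I : JITInstance m J)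
    (E : Finset J) (S : Fin m → J → ℕ) : Prop :=
  (∀ i : Fin m, ∀ j ∈ E, ∀ j' ∈ E, j ≠ j' →
      S i j + I.p i j ≤ S i j' ∨ S i j' + I.p i j' ≤ S i j) ∧
  (∀ j ∈ E, ∀ i i' : Fin m, i'.val = i.val + 1 →
      S i j + I.p i j ≤ S i' j) ∧
  (∀ j ∈ E, ∀ i : Fin m, i.val = m - 1 →
      S i j + I.p i j = I.d j)

/-- A job set is feasible if it admits a JIT schedule. -/
def Feasible {m : ℕ} {J : Type} (I : JITInstance m J) (E : Finset J) : Prop :=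
  ∃ S : Fin m → J → ℕ, IsJITSchedule I E S

/-- The two-machine JIT flow-shop instance constructed in the kSUM reduction:
for each `i ∈ {1,…,k}`, `j ∈ {1,…,h}` a job `J_{ij}` (encoded `Sum.inl (i, j)`,
0-indexed) with `p¹ = x j`, `p² = 1`, `w = T + x j`, `d = iT`, and one extra
job `J_{kh+1}` (encoded `Sum.inr ()`) with `p¹ = (k+1)T - B`, `p² = 1`,
`w = k²(T+1)²`, `d = (k+1)T + 1`, where `T = ∑ i, x i`. -/
def ksumInstance2 (h k B : ℕ) (x : Fin h → ℕ) (hx : ∀ i, 0 < x i)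
    (hk : 1 ≤ k) (hB : 0 < B) (hBT : B < ∑ i, x i) :
    JITInstance 2 (Fin k × Fin h ⊕ Unit) where
  p := fun i jb =>
    if i.val = 0 then
      Sum.elim (fun q => x q.2) (fun _ => (k + 1) * (∑ i, x i) - B) jb
    else 1
  d := Sum.elim (fun q => (q.1.val + 1) * (∑ i, x i))
    (fun _ => (k + 1) * (∑ i, x i) + 1)
  w := Sum.elim (fun q => (∑ i, x i) + x q.2)
    (fun _ => k ^ 2 * ((∑ i, x i) + 1) ^ 2)
  p_pos := by
    intro i jb
    try dsimp only
    split
    · rcases jb with ⟨a, j⟩ | u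
      · simpa using hx j
      · simp only [Sum.elim_inr]
        have h1 : (∑ i, x i) ≤ (k + 1) * (∑ i, x i) :=
          Nat.le_mul_of_pos_left _ (by omega)
        omega
    · exact one_pos
  d_pos := by
    rintro (⟨a, j⟩ | u)
    · simp only [Sum.elim_inl]
      exact Nat.mul_pos (by omega) (by omega)
    · simp only [Sum.elim_inr]
      omega
  w_pos := by
    rintro (⟨a, j⟩ | u)
    · simp only [Sum.elim_inl]
      have := hx j
      omega
    · simp only [Sum.elim_inr]
      exact Nat.mul_pos (pow_pos (by omega : 0 < k) 2)
        (pow_pos (by omega : 0 < (∑ i, x i) + 1) 2)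

namespace IsJITSchedule

variable {J : Type} {E : Finset J}

theorem injOn_d {m : ℕ} {I : JITInstance (m + 1) J} {S : Fin (m + 1) → J → ℕ}
    (hS : IsJITSchedule I E S) : Set.InjOn I.d E := by
  intro j hj j' hj' hd
  by_contra hne
  have hc := hS.2.2 j hj (Fin.last m) (by simp)
  have hc' := hS.2.2 j' hj' (Fin.last m) (by simp)
  have := I.p_pos (Fin.last m) j
  have := I.p_pos (Fin.last m) j'
  rcases hS.1 (Fin.last m) j hj j' hj' hne with h | h <;> omega

theorem sum_p_le_of_forall_mem_window {m : ℕ} {I : JITInstance m J} {S : Fin m → J → ℕ}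
    (hS : IsJITSchedule I E S) (i : Fin m) {F : Finset J} (hF : F ⊆ E) {a b : ℕ}
    (hwin : ∀ j ∈ F, a ≤ S i j ∧ S i j + I.p i j ≤ b) :
    ∑ j ∈ F, I.p i j ≤ b - a := by
  classical
  have hdisj : (F : Set J).PairwiseDisjoint fun j => Ioc (S i j) (S i j + I.p i j) := by
    intro j hj j' hj' hne
    rw [Function.onFun, Finset.disjoint_left]
    intro t ht ht'
    simp only [mem_Ioc] at ht ht'
    rcases hS.1 i j (hF hj) j' (hF hj') hne with h | h <;> omega
  calc ∑ j ∈ F, I.p i j = #(F.biUnion fun j => Ioc (S i j) (S i j + I.p i j)) := by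
        simp [card_biUnion hdisj]
    _ ≤ #(Ioc a b) := by
        refine card_le_card fun t ht => ?_
        obtain ⟨j, hj, ht⟩ := mem_biUnion.1 ht
        have := hwin j hj
        simp only [mem_Ioc] at ht ⊢
        omega
    _ = b - a := Nat.card_Ioc a b

theorem add_p_add_p_le_d {I : JITInstance 2 J} {S : Fin 2 → J → ℕ}
    (hS : IsJITSchedule I E S) {j : J} (hj : j ∈ E) :
    S 0 j + I.p 0 j + I.p 1 j ≤ I.d j := by
  have h01 := hS.2.1 j hj 0 1 rfl
  have hdue := hS.2.2 j hj 1 rfl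
  omega

end IsJITSchedule

namespace ksumInstance2

variable {h k B : ℕ} {x : Fin h → ℕ} {hx : ∀ i, 0 < x i} {hk : 1 ≤ k} {hB : 0 < B}
  {hBT : B < ∑ i, x i}

local notation "𝓘" => ksumInstance2 h k B x hx hk hB hBT

@[simp] theorem p_zero_inl (q : Fin k × Fin h) : (𝓘).p 0 (Sum.inl q) = x q.2 := rfl

@[simp] theorem p_zero_inr (u : Unit) :
    (𝓘).p 0 (Sum.inr u) = (k + 1) * (∑ i, x i) - B := rfl

@[simp] theorem p_one (jb : Fin k × Fin h ⊕ Unit) : (𝓘).p 1 jb = 1 := rfl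

@[simp] theorem d_inl (q : Fin k × Fin h) : (𝓘).d (Sum.inl q) = (q.1.val + 1) * ∑ i, x i := rfl

@[simp] theorem d_inr (u : Unit) : (𝓘).d (Sum.inr u) = (k + 1) * (∑ i, x i) + 1 := rfl

@[simp] theorem w_inl (q : Fin k × Fin h) : (𝓘).w (Sum.inl q) = (∑ i, x i) + x q.2 := rfl

@[simp] theorem w_inr (u : Unit) : (𝓘).w (Sum.inr u) = k ^ 2 * ((∑ i, x i) + 1) ^ 2 := rfl

variable {E : Finset (Fin k × Fin h ⊕ Unit)} {S : Fin 2 → Fin k × Fin h ⊕ Unit → ℕ}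

theorem eq_of_inl_mem (hS : IsJITSchedule (𝓘) E S) {a : Fin k} {j j' : Fin h}
    (hj : Sum.inl (a, j) ∈ E) (hj' : Sum.inl (a, j') ∈ E) : j = j' := by
  simpa using hS.injOn_d hj hj' rfl

theorem card_erase_inr_le (hS : IsJITSchedule (𝓘) E S) : #(E.erase (Sum.inr ())) ≤ k := by
  calc #(E.erase (Sum.inr ()))
      ≤ #(univ : Finset (Fin k)) := card_le_card_of_injOn (Sum.elim Prod.fst fun _ => ⟨0, hk⟩)
        (fun _ _ => mem_univ _) ?_
    _ = k := by simp
  rintro (⟨a, j⟩ | ⟨⟩) hq (⟨a', j'⟩ | ⟨⟩) hq' heq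
  · obtain rfl : a = a' := heq
    rw [eq_of_inl_mem hS (mem_of_mem_erase hq) (mem_of_mem_erase hq')]
  all_goals simp at hq hq'

theorem inr_mem (hS : IsJITSchedule (𝓘) E S)
    (hwt : k * (∑ i, x i) + B + k ^ 2 * ((∑ i, x i) + 1) ^ 2 ≤ ∑ jb ∈ E, (𝓘).w jb) :
    Sum.inr () ∈ E := by
  by_contra hinr
  have hsmall : ∀ jb ∈ E, (𝓘).w jb ≤ 2 * ∑ i, x i := by
    rintro (⟨a, j⟩ | ⟨⟩) hjb
    · have : x j ≤ ∑ i, x i := single_le_sum (fun i _ => Nat.zero_le (x i)) (mem_univ j)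
      simp only [w_inl]
      omega
    · exact absurd hjb hinr
  have hcard : #E ≤ k := erase_eq_of_notMem hinr ▸ card_erase_inr_le hS
  have hlight : ∑ jb ∈ E, (𝓘).w jb ≤ k * (2 * ∑ i, x i) :=
    (sum_le_card_nsmul E _ _ hsmall).trans (Nat.mul_le_mul_right _ hcard)
  have hbig : k * ∑ i, x i ≤ k ^ 2 * ((∑ i, x i) + 1) ^ 2 :=
    Nat.mul_le_mul (Nat.le_self_pow two_ne_zero k) (by nlinarith)
  linarith

theorem start_inr_le (hS : IsJITSchedule (𝓘) E S) (hinr : Sum.inr () ∈ E) :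
    S 0 (Sum.inr ()) ≤ B := by
  have := hS.add_p_add_p_le_d hinr
  have : B ≤ (k + 1) * ∑ i, x i := hBT.le.trans (Nat.le_mul_of_pos_left _ k.succ_pos)
  simp only [p_zero_inr, p_one, d_inr] at *
  omega

theorem inl_end_le_start_inr (hS : IsJITSchedule (𝓘) E S) (hinr : Sum.inr () ∈ E)
    {q : Fin k × Fin h} (hq : Sum.inl q ∈ E) :
    S 0 (Sum.inl q) + x q.2 ≤ S 0 (Sum.inr ()) := by
  have hend := hS.add_p_add_p_le_d hq
  have hrow : (q.1.val + 1) * ∑ i, x i ≤ k * ∑ i, x i := Nat.mul_le_mul_right _ q.1.isLt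
  have hdisj := hS.1 0 _ hq _ hinr Sum.inl_ne_inr
  simp only [p_zero_inl, p_zero_inr, p_one, d_inl, add_one_mul] at *
  omega

theorem sum_p_zero_erase_inr_le (hS : IsJITSchedule (𝓘) E S) (hinr : Sum.inr () ∈ E) :
    ∑ jb ∈ E.erase (Sum.inr ()), (𝓘).p 0 jb ≤ B := by
  have := hS.sum_p_le_of_forall_mem_window 0 (erase_subset (Sum.inr ()) E) (a := 0) (b := B) ?_
  · simpa using this
  rintro (q | ⟨⟩) hq
  · have := inl_end_le_start_inr hS hinr (mem_of_mem_erase hq)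
    have := start_inr_le hS hinr
    simp only [p_zero_inl]
    omega
  · simp at hq

theorem sum_w_eq (hinr : Sum.inr () ∈ E) :
    ∑ jb ∈ E, (𝓘).w jb = k ^ 2 * ((∑ i, x i) + 1) ^ 2
      + #(E.erase (Sum.inr ())) * ∑ i, x i + ∑ jb ∈ E.erase (Sum.inr ()), (𝓘).p 0 jb := by
  have hsplit : ∀ jb ∈ E.erase (Sum.inr ()), (𝓘).w jb = (∑ i, x i) + (𝓘).p 0 jb := by
    rintro (q | ⟨⟩) hq
    · rfl
    · simp at hq
  rw [← add_sum_erase E _ hinr, sum_congr rfl hsplit, sum_add_distrib, sum_const, smul_eq_mul,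
    w_inr, add_assoc]

end ksumInstance2

open ksumInstance2 in
theorem ksum_two_machines_structure (h k B : ℕ) (x : Fin h → ℕ)
    (hx : ∀ i, 0 < x i) (hk : 1 ≤ k) (hB : 0 < B)
    (hBT : B < ∑ i, x i)
    (E : Finset (Fin k × Fin h ⊕ Unit))
    (hfeas : Feasible (ksumInstance2 h k B x hx hk hB hBT) E)
    (hwt : k * (∑ i, x i) + B + k ^ 2 * ((∑ i, x i) + 1) ^ 2
      ≤ ∑ jb ∈ E, (ksumInstance2 h k B x hx hk hB hBT).w jb) :
    Sum.inr () ∈ E ∧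
    (E.erase (Sum.inr ())).card = k ∧
    (∀ i : Fin k, ∀ j j' : Fin h,
      Sum.inl (i, j) ∈ E.erase (Sum.inr ()) →
      Sum.inl (i, j') ∈ E.erase (Sum.inr ()) → j = j') ∧
    ∑ jb ∈ E.erase (Sum.inr ()),
        (match jb with | Sum.inl (_, j) => x j | Sum.inr _ => 0) = B := by
  obtain ⟨S, hS⟩ := hfeas
  have hinr := inr_mem hS hwt
  have hcard := card_erase_inr_le hS
  have hsum := sum_p_zero_erase_inr_le hS hinr
  have hx_eq_p : ∑ jb ∈ E.erase (Sum.inr ()),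
      (match jb with | Sum.inl (_, j) => x j | Sum.inr _ => 0) =
      ∑ jb ∈ E.erase (Sum.inr ()), (ksumInstance2 h k B x hx hk hB hBT).p 0 jb := by
    refine sum_congr rfl ?_
    rintro (q | ⟨⟩) hq
    · rfl
    · simp at hq
  rw [sum_w_eq hinr] at hwt
  have hkT := Nat.mul_le_mul_right (∑ i, x i) hcard
  refine ⟨hinr, le_antisymm hcard (Nat.le_of_mul_le_mul_right (by omega) (hB.trans hBT)),
    fun i j j' hj hj' => eq_of_inl_mem hS (mem_of_mem_erase hj) (mem_of_mem_erase hj'), ?_⟩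
  omega
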